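/- Let ζ ∈ ℓ^∞(ℤ; ℂ) with |ζ_n| → q₀ as |n| → ∞ in the sense that (|ζ_n| − q₀)_{n} ∈ ℓ², and suppose the discrete derivative ζ' = (ζ_n − ζ_{n−1})_n ∈ ℓ². Let F : ℝ → ℝ satisfy |F(x) − F(y)| ≤ K(|x|^{p−1} + |y|^{p−1})|x − y| for x, y ≥ 0 with p ≥ 1, K > 0. Then the operator G(Φ)_n := [F(|Φ_n + ζ_n|²) − F(q₀²)](Φ_n + ζ_n) maps ℓ² into ℓ² with ‖G(Φ)‖_{ℓ²} ≤ 2√2 K (‖Φ‖_{ℓ^∞} + ‖ζ‖_{ℓ^∞} + q₀)^{2p} (‖Φ‖_{ℓ²} + ‖|ζ| − q₀‖_{ℓ²}). -/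

import Mathlib

/-! Since `G(Φ)_n` vanishes where `|Φ_n + ζ_n| = q₀`, the growth condition on `F` bounds it by the
distance of `|Φ_n + ζ_n|` to `q₀`: with `M = ‖Φ‖_∞ + ‖ζ‖_∞ + q₀`,
`|G(Φ)_n| ≤ 2 K M^{2p} |(|Φ_n + ζ_n| - q₀)| ≤ 2 K M^{2p} (|Φ_n| + |(|ζ_n| - q₀)|)`,
and Minkowski's inequality in `ℓ²` turns this pointwise bound into the norm bound. -/

noncomputable def l2norm (f : ℤ → ℂ) : ℝ := Real.sqrt (∑' n : ℤ, ‖f n‖ ^ 2)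

noncomputable def linfnorm (f : ℤ → ℂ) : ℝ := ⨆ n : ℤ, ‖f n‖

/-- The gDNLS nonlinearity G(Φ)_n = [F(|Φ_n+ζ_n|²) − F(q₀²)](Φ_n+ζ_n). -/
noncomputable def gNonlin (F : ℝ → ℝ) (ζ : ℤ → ℂ) (q0 : ℝ) (Φ : ℤ → ℂ) (n : ℤ) : ℂ :=
  ((F (‖Φ n + ζ n‖ ^ 2) - F (q0 ^ 2) : ℝ) : ℂ) * (Φ n + ζ n)

theorem memℓp_two_iff_summable_sq {ι : Type*} {E : ι → Type*} [∀ i, NormedAddCommGroup (E i)]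
    {f : ∀ i, E i} : Memℓp f 2 ↔ Summable fun i => ‖f i‖ ^ 2 := by
  rw [memℓp_gen_iff (by norm_num)]
  norm_num

theorem norm_le_linfnorm {f : ℤ → ℂ} (hf : Memℓp f ⊤) (n : ℤ) : ‖f n‖ ≤ linfnorm f :=
  le_ciSup (memℓp_infty_iff.1 hf) n

theorem sqrt_tsum_add_sq_le {ι : Type*} {u v : ι → ℝ} (hu : ∀ i, 0 ≤ u i) (hv : ∀ i, 0 ≤ v i)
    (hu2 : Summable fun i => u i ^ 2) (hv2 : Summable fun i => v i ^ 2) :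
    (Summable fun i => (u i + v i) ^ 2) ∧
      √(∑' i, (u i + v i) ^ 2) ≤ √(∑' i, u i ^ 2) + √(∑' i, v i ^ 2) := by
  have h := Real.Lp_add_le_tsum_of_nonneg (p := 2) one_le_two hu hv
    (by simpa using hu2) (by simpa using hv2)
  simpa only [Real.rpow_two, Real.sqrt_eq_rpow] using h

theorem sqrt_tsum_sq_le_of_le_mul_add {ι : Type*} {w u v : ι → ℝ} {C : ℝ} (hC : 0 ≤ C)
    (hw : ∀ i, 0 ≤ w i) (hu : ∀ i, 0 ≤ u i) (hv : ∀ i, 0 ≤ v i)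
    (hwuv : ∀ i, w i ≤ C * (u i + v i))
    (hu2 : Summable fun i => u i ^ 2) (hv2 : Summable fun i => v i ^ 2) :
    (Summable fun i => w i ^ 2) ∧
      √(∑' i, w i ^ 2) ≤ C * (√(∑' i, u i ^ 2) + √(∑' i, v i ^ 2)) := by
  obtain ⟨huv2, hmink⟩ := sqrt_tsum_add_sq_le hu hv hu2 hv2
  have hsq : ∀ i, w i ^ 2 ≤ C ^ 2 * (u i + v i) ^ 2 := fun i => by
    rw [← mul_pow]; exact pow_le_pow_left₀ (hw i) (hwuv i) 2
  have hw2 : Summable fun i => w i ^ 2 :=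
    (huv2.mul_left _).of_nonneg_of_le (fun i => sq_nonneg _) hsq
  refine ⟨hw2, ?_⟩
  calc √(∑' i, w i ^ 2) ≤ √(C ^ 2 * ∑' i, (u i + v i) ^ 2) := by
        rw [← tsum_mul_left]
        exact Real.sqrt_le_sqrt (hw2.tsum_le_tsum hsq (huv2.mul_left _))
    _ = C * √(∑' i, (u i + v i) ^ 2) := by
        rw [Real.sqrt_mul' _ (tsum_nonneg fun i => sq_nonneg _), Real.sqrt_sq hC]
    _ ≤ C * (√(∑' i, u i ^ 2) + √(∑' i, v i ^ 2)) := mul_le_mul_of_nonneg_left hmink hC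

theorem abs_norm_add_sub_le {E : Type*} [SeminormedAddCommGroup E] (x y : E) (q : ℝ) :
    |‖x + y‖ - q| ≤ ‖x‖ + |‖y‖ - q| :=
  calc |‖x + y‖ - q| = |(‖x + y‖ - ‖y‖) + (‖y‖ - q)| := by ring_nf
    _ ≤ |‖x + y‖ - ‖y‖| + |‖y‖ - q| := abs_add_le _ _
    _ ≤ ‖x‖ + |‖y‖ - q| := by
        gcongr
        simpa using abs_norm_sub_norm_le (x + y) y

theorem abs_sub_mul_le_of_rpow_lipschitz {F : ℝ → ℝ} {K p : ℝ} (hK : 0 ≤ K) (hp : 1 ≤ p)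
    (hF : ∀ x y : ℝ, 0 ≤ x → 0 ≤ y →
      |F x - F y| ≤ K * (|x| ^ (p - 1) + |y| ^ (p - 1)) * |x - y|)
    {a q M : ℝ} (ha : 0 ≤ a) (hq : 0 ≤ q) (hM : a + q ≤ M) :
    |F (a ^ 2) - F (q ^ 2)| * a ≤ 2 * K * M ^ (2 * p) * |a - q| := by
  have hM0 : 0 ≤ M := by linarith
  have hpow : ∀ x, 0 ≤ x → x ≤ M → |x ^ 2| ^ (p - 1) ≤ (M ^ 2) ^ (p - 1) := fun x hx hxM => by
    rw [abs_of_nonneg (sq_nonneg x)]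
    exact Real.rpow_le_rpow (sq_nonneg x) (pow_le_pow_left₀ hx hxM 2) (by linarith)
  have hdiff : |a ^ 2 - q ^ 2| ≤ M * |a - q| := by
    rw [show a ^ 2 - q ^ 2 = (a + q) * (a - q) by ring, abs_mul, abs_of_nonneg (by positivity)]
    exact mul_le_mul_of_nonneg_right hM (abs_nonneg _)
  have hMp : (M ^ 2) ^ (p - 1) * M ^ 2 = M ^ (2 * p) := by
    rw [← Real.rpow_add_one' (sq_nonneg M) (by linarith), sub_add_cancel, Real.rpow_mul hM0]
    norm_cast
  calc |F (a ^ 2) - F (q ^ 2)| * a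
      ≤ K * (|a ^ 2| ^ (p - 1) + |q ^ 2| ^ (p - 1)) * |a ^ 2 - q ^ 2| * M := by
        gcongr
        · exact hF _ _ (sq_nonneg a) (sq_nonneg q)
        · linarith
    _ ≤ K * ((M ^ 2) ^ (p - 1) + (M ^ 2) ^ (p - 1)) * (M * |a - q|) * M := by
        gcongr ?_ * ?_ * ?_ * _
        exact add_le_add (hpow a ha (by linarith)) (hpow q hq (by linarith))
    _ = 2 * K * ((M ^ 2) ^ (p - 1) * M ^ 2) * |a - q| := by ring
    _ = 2 * K * M ^ (2 * p) * |a - q| := by rw [hMp]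

theorem norm_gNonlin_le {F : ℝ → ℝ} {K p : ℝ} (hK : 0 ≤ K) (hp : 1 ≤ p)
    (hF : ∀ x y : ℝ, 0 ≤ x → 0 ≤ y →
      |F x - F y| ≤ K * (|x| ^ (p - 1) + |y| ^ (p - 1)) * |x - y|)
    {ζ Φ : ℤ → ℂ} {q0 M : ℝ} (hq0 : 0 ≤ q0) {n : ℤ} (hM : ‖Φ n‖ + ‖ζ n‖ + q0 ≤ M) :
    ‖gNonlin F ζ q0 Φ n‖ ≤ 2 * K * M ^ (2 * p) * (‖Φ n‖ + |‖ζ n‖ - q0|) := by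
  have hnorm : ‖gNonlin F ζ q0 Φ n‖ = |F (‖Φ n + ζ n‖ ^ 2) - F (q0 ^ 2)| * ‖Φ n + ζ n‖ := by
    simp only [gNonlin, norm_mul, Complex.norm_real, Real.norm_eq_abs]
  rw [hnorm]
  refine (abs_sub_mul_le_of_rpow_lipschitz hK hp hF (M := M) (norm_nonneg _) hq0
    (by linarith [norm_add_le (Φ n) (ζ n)])).trans ?_
  have hM0 : 0 ≤ M := by linarith [norm_nonneg (Φ n), norm_nonneg (ζ n)]
  gcongr
  exact abs_norm_add_sub_le _ _ _

theorem gNonlin_into_l2_general (ζ : ℤ → ℂ) (q0 : ℝ) (hq0 : 0 < q0)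
    (hζ : Memℓp ζ ⊤)
    (hζq : Memℓp (fun n : ℤ => (‖ζ n‖ - q0 : ℝ)) 2)
    (F : ℝ → ℝ) (K p : ℝ) (hK : 0 < K) (hp : 1 ≤ p)
    (hF : ∀ x y : ℝ, 0 ≤ x → 0 ≤ y →
      |F x - F y| ≤ K * (|x| ^ (p - 1) + |y| ^ (p - 1)) * |x - y|)
    (Φ : ℤ → ℂ) (hΦ : Memℓp Φ 2) :
    Memℓp (gNonlin F ζ q0 Φ) 2 ∧
    l2norm (gNonlin F ζ q0 Φ) ≤
      2 * Real.sqrt 2 * K * (linfnorm Φ + linfnorm ζ + q0) ^ (2 * p) *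
        (l2norm Φ + Real.sqrt (∑' n : ℤ, |‖ζ n‖ - q0| ^ 2)) := by
  set M := linfnorm Φ + linfnorm ζ + q0
  have hM n : ‖Φ n‖ + ‖ζ n‖ + q0 ≤ M := by
    linarith [norm_le_linfnorm (hΦ.of_exponent_ge le_top) n, norm_le_linfnorm hζ n]
  have hM0 : 0 ≤ M := by linarith [hM 0, norm_nonneg (Φ 0), norm_nonneg (ζ 0)]
  obtain ⟨hG, hGle⟩ := sqrt_tsum_sq_le_of_le_mul_add (by positivity) (fun n => norm_nonneg _)
    (fun n => norm_nonneg (Φ n)) (fun n => abs_nonneg (‖ζ n‖ - q0))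
    (fun n => norm_gNonlin_le hK.le hp hF hq0.le (hM n))
    (memℓp_two_iff_summable_sq.1 hΦ) (by simpa using memℓp_two_iff_summable_sq.1 hζq)
  refine ⟨memℓp_two_iff_summable_sq.2 hG, hGle.trans ?_⟩
  have hbound : 0 ≤ 2 * K * M ^ (2 * p) * (l2norm Φ + √(∑' n : ℤ, |‖ζ n‖ - q0| ^ 2)) := by
    unfold l2norm; positivity
  exact (le_mul_of_one_le_left hbound Real.one_lt_sqrt_two.le).trans_eq (by ring)

/-- G maps ℓ² into ℓ² with the stated bound. -/
theorem gNonlin_into_l2 (ζ : ℤ → ℂ) (q0 : ℝ) (hq0 : 0 < q0)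
    (hζ : Memℓp ζ ⊤)
    (hζ' : Memℓp (fun n : ℤ => ζ n - ζ (n - 1)) 2)
    (hζq : Memℓp (fun n : ℤ => (‖ζ n‖ - q0 : ℝ)) 2)
    (F : ℝ → ℝ) (K p : ℝ) (hK : 0 < K) (hp : 1 ≤ p)
    (hF : ∀ x y : ℝ, 0 ≤ x → 0 ≤ y →
      |F x - F y| ≤ K * (|x| ^ (p - 1) + |y| ^ (p - 1)) * |x - y|)
    (Φ : ℤ → ℂ) (hΦ : Memℓp Φ 2) :
    Memℓp (gNonlin F ζ q0 Φ) 2 ∧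
    l2norm (gNonlin F ζ q0 Φ) ≤
      2 * Real.sqrt 2 * K * (linfnorm Φ + linfnorm ζ + q0) ^ (2 * p) *
        (l2norm Φ + Real.sqrt (∑' n : ℤ, |‖ζ n‖ - q0| ^ 2)) :=
  gNonlin_into_l2_general ζ q0 hq0 hζ hζq F K p hK hp hF Φ hΦ
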